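/- arXiv:1909.07135 — 7 statements merged into one kernel-verified Lean document; each statement's English description precedes it below -/
import Mathlib

section
/- Let K be an infinite field of characteristic ≠ 2 and let {q_i}_{i∈I} be a nonsingular system of quadratic forms on a finite-dimensional K-vector space V. Then the K-span of {q_i | i ∈ I} inside the space of quadratic forms on V contains a unimodular (nondegenerate) quadratic form. -/
/-!
The determinant of the generic member `∑ i, X i • Mᵢ` of the pencil spanned by the Gram matrices
is a polynomial in the coefficients. Nonsingularity says it does not vanish at some point of an
extension field, so it is a nonzero polynomial, and a nonzero polynomial over an infinite field
has a nonvanishing value at a point of `K`.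
-/

open Module TensorProduct

/-- A system of quadratic (symmetric bilinear) forms is nonsingular if over some field
extension `L/K` the `L`-span of the base-changed forms contains a nondegenerate form. -/
def IsNonsingularSystem {K : Type u} {V : Type v} [Field K] [AddCommGroup V] [Module K V]
    {ι : Type*} (B : ι → LinearMap.BilinForm K V) : Prop :=
  ∃ (L : Type (max u v)) (_ : Field L) (_ : Algebra K L),
    ∃ B' ∈ Submodule.span L
      (Set.range fun i => LinearMap.BilinForm.baseChange L (B i)),
      LinearMap.BilinForm.Nondegenerate B'

namespace Matrix

open MvPolynomial

variable {R : Type*} [CommRing R] {ι n : Type*} [Fintype n] [DecidableEq n]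

noncomputable def pencilDet (s : Finset ι) (M : ι → Matrix n n R) : MvPolynomial ι R :=
  (∑ i ∈ s, (X i : MvPolynomial ι R) • (M i).map C).det

theorem aeval_pencilDet {A : Type*} [CommRing A] [Algebra R A] (s : Finset ι)
    (M : ι → Matrix n n R) (x : ι → A) :
    aeval x (pencilDet s M) = (∑ i ∈ s, x i • (M i).map (algebraMap R A)).det := by
  rw [pencilDet, AlgHom.map_det]
  congr 1
  ext j k
  simp [sum_apply]

theorem eval_pencilDet (s : Finset ι) (M : ι → Matrix n n R) (x : ι → R) :
    eval x (pencilDet s M) = (∑ i ∈ s, x i • M i).det := by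
  simpa using aeval_pencilDet s M x

theorem exists_det_sum_smul_ne_zero [IsDomain R] [Infinite R] {A : Type*} [CommRing A]
    [Algebra R A] {s : Finset ι} {M : ι → Matrix n n R} {x : ι → A}
    (hx : (∑ i ∈ s, x i • (M i).map (algebraMap R A)).det ≠ 0) :
    ∃ y : ι → R, (∑ i ∈ s, y i • M i).det ≠ 0 := by
  have hP : pencilDet s M ≠ 0 := fun hP => hx (by rw [← aeval_pencilDet, hP, map_zero])
  by_contra! hy
  exact hP (MvPolynomial.funext fun y => by rw [eval_pencilDet, hy, map_zero])

end Matrix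

namespace LinearMap.BilinForm

open LinearMap (BilinForm)

variable {R A M : Type*} [CommRing R] [CommRing A] [Algebra R A] [AddCommGroup M] [Module R M]

theorem toMatrix_baseChange {n : Type*} [Fintype n] [DecidableEq n] (b : Basis n R M)
    (B : BilinForm R M) :
    toMatrix (b.baseChange A) (B.baseChange A) = (toMatrix b B).map (algebraMap R A) := by
  ext j k
  simp [Algebra.algebraMap_eq_smul_one]

theorem exists_nondegenerate_sum_smul_of_baseChange [IsDomain R] [Infinite R] [IsDomain A]
    [Module.Free R M] [Module.Finite R M] {ι : Type*} {B : ι → BilinForm R M} {s : Finset ι}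
    {c : ι → A} (h : (∑ i ∈ s, c i • (B i).baseChange A).Nondegenerate) :
    ∃ y : ι → R, (∑ i ∈ s, y i • B i).Nondegenerate := by
  let b := Module.Free.chooseBasis R M
  rw [nondegenerate_iff_det_ne_zero (b.baseChange A)] at h
  simp only [map_sum, map_smul, toMatrix_baseChange] at h
  obtain ⟨y, hy⟩ := Matrix.exists_det_sum_smul_ne_zero h
  refine ⟨y, (nondegenerate_iff_det_ne_zero b).mpr ?_⟩
  simpa only [map_sum, map_smul] using hy

end LinearMap.BilinForm

theorem statement4_general {K : Type u} {V : Type v} [Field K] [Infinite K]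
    [AddCommGroup V] [Module K V] [FiniteDimensional K V]
    {ι : Type*} (B : ι → LinearMap.BilinForm K V)
    (hns : IsNonsingularSystem B) :
    ∃ B' ∈ Submodule.span K (Set.range B), LinearMap.BilinForm.Nondegenerate B' := by
  obtain ⟨L, _, _, B', hB', hnd⟩ := hns
  obtain ⟨c, rfl⟩ := Finsupp.mem_span_range_iff_exists_finsupp.mp hB'
  obtain ⟨y, hy⟩ := LinearMap.BilinForm.exists_nondegenerate_sum_smul_of_baseChange
    (s := c.support) hnd
  refine ⟨_, Submodule.sum_mem _ fun i _ => ?_, hy⟩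
  exact Submodule.smul_mem _ (y i) (Submodule.subset_span ⟨i, rfl⟩)

/-- **Lemma.** Over an infinite field, the `K`-span of a nonsingular system of quadratic
forms contains a nondegenerate form. -/
theorem statement4 {K : Type u} {V : Type v} [Field K] [Infinite K] (hchar : (2 : K) ≠ 0)
    [AddCommGroup V] [Module K V] [FiniteDimensional K V]
    {ι : Type*} (B : ι → LinearMap.BilinForm K V) (hB : ∀ i, (B i).IsSymm)
    (hns : IsNonsingularSystem B) :
    ∃ B' ∈ Submodule.span K (Set.range B), LinearMap.BilinForm.Nondegenerate B' :=
  statement4_general B hns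
end

section
/- Let (A, σ) be a finite-dimensional K-algebra with involution over a field K of characteristic ≠ 2, let n ∈ ℕ, and let f_n : A^n × A^n → A be the 1-hermitian form f_n((x_i)_{i=1}^n, (y_i)_{i=1}^n) = Σ_{i=1}^n x_i^σ y_i. Then the involution n×σ on M_n(A) is hyperbolic (i.e., there is an idempotent e ∈ M_n(A) with e^{n×σ} + e = 1) if and only if f_n is hyperbolic, i.e., A^n = U ⊕ W for right A-submodules U, W with f_n(U, U) = 0 and f_n(W, W) = 0. -/
/-!
An involution `σ` is a `StarRing` structure on `A`; then `n × σ` is the conjugate transpose and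
`f_n(x, y) = star x ⬝ᵥ y`, so the adjoint of a matrix `M` with respect to `f_n` is `Mᴴ`.
If `e` is idempotent with `eᴴ = 1 - e`, then `f_n(e x, e y) = f_n(x, (1 - e) e y) = 0`, and on
`ker e` the matrix `eᴴ` acts as the identity, so `f_n(x, y) = f_n(x, e y) = 0` there: `range e` and
`ker e` are complementary totally isotropic submodules. Conversely, if `p` is the projection onto
`U` along `W` with `U, W` totally isotropic, expanding `x, y` along `U ⊕ W` gives
`f_n(p x, y) + f_n(x, p y) = f_n(x, y)`, i.e. the matrix `e` of `p` satisfies `eᴴ + e = 1`.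
-/

open Module

/-- The involution `n × σ` on `Mₙ(A)` is hyperbolic: there is an idempotent `e` with
`e^{n×σ} + e = 1`, where `(n×σ)(e) = (σ (e j i))_{i j}`. -/
def MatrixInvolutionHyperbolic {A : Type*} [Ring A] (σ : A → A) (n : ℕ) : Prop :=
  ∃ e : Matrix (Fin n) (Fin n) A, e * e = e ∧
    (Matrix.of fun i j => σ (e j i)) + e = 1

open Matrix

section

variable {A m n : Type*} [Ring A] [Fintype n]

theorem LinearMap.eq_mulVecBilin [DecidableEq n] (f : (n → A) →ₗ[Aᵐᵒᵖ] (m → A)) :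
    f = mulVecBilin A Aᵐᵒᵖ (Matrix.of fun i j => f (Pi.single j 1) i) :=
  LinearMap.pi_ext' fun j => LinearMap.ext_ring_op <| by simp; rfl

section StarRing

variable [StarRing A]

theorem Matrix.star_mulVec_dotProduct [Fintype m] (M : Matrix m n A) (x : n → A) (y : m → A) :
    star (M *ᵥ x) ⬝ᵥ y = star x ⬝ᵥ (Mᴴ *ᵥ y) := by
  rw [star_mulVec, dotProduct_mulVec]

variable (A n) in
def IsTotallyIsotropic (U : Submodule Aᵐᵒᵖ (n → A)) : Prop :=
  ∀ x ∈ U, ∀ y ∈ U, star x ⬝ᵥ y = 0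

theorem IsTotallyIsotropic.star_projection_dotProduct_add {U W : Submodule Aᵐᵒᵖ (n → A)}
    (hUW : IsCompl U W) (hU : IsTotallyIsotropic A n U) (hW : IsTotallyIsotropic A n W)
    (x y : n → A) :
    star (U.projection W hUW x) ⬝ᵥ y + star x ⬝ᵥ U.projection W hUW y = star x ⬝ᵥ y := by
  have hp : ∀ u ∈ U, ∀ w ∈ W, U.projection W hUW (u + w) = u := fun u hu w hw => by
    rw [map_add, Submodule.projection_apply_of_mem_left hUW hu,
      Submodule.projection_apply_of_mem_right hUW hw, add_zero]
  obtain ⟨⟨u, hu⟩, ⟨w, hw⟩, rfl, -⟩ := Submodule.existsUnique_add_of_isCompl hUW x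
  obtain ⟨⟨u', hu'⟩, ⟨w', hw'⟩, rfl, -⟩ := Submodule.existsUnique_add_of_isCompl hUW y
  simp only [hp u hu w hw, hp u' hu' w' hw', star_add, add_dotProduct, dotProduct_add,
    hU u hu u' hu', hW w hw w' hw']
  abel

variable [DecidableEq n]

theorem isTotallyIsotropic_range_mulVecBilin {e : Matrix n n A} (he : IsIdempotentElem e)
    (hσ : eᴴ + e = 1) : IsTotallyIsotropic A n (LinearMap.range (mulVecBilin A Aᵐᵒᵖ e)) := by
  rintro _ ⟨a, rfl⟩ _ ⟨b, rfl⟩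
  have : eᴴ * e = 0 := by rw [eq_sub_of_add_eq hσ, sub_mul, one_mul, he.eq, sub_self]
  simp [star_mulVec_dotProduct, mulVec_mulVec, this]

theorem isTotallyIsotropic_ker_mulVecBilin {e : Matrix n n A} (hσ : eᴴ + e = 1) :
    IsTotallyIsotropic A n (LinearMap.ker (mulVecBilin A Aᵐᵒᵖ e)) := by
  intro x hx y hy
  rw [LinearMap.mem_ker, mulVecBilin_apply] at hx hy
  have hx' : eᴴ *ᵥ x = x := by rw [eq_sub_of_add_eq hσ, sub_mulVec, one_mulVec, hx, sub_zero]
  rw [← hx', star_mulVec_dotProduct, conjTranspose_conjTranspose, hy, dotProduct_zero]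

theorem exists_isIdempotentElem_conjTranspose_add_eq_one_iff :
    (∃ e : Matrix n n A, IsIdempotentElem e ∧ eᴴ + e = 1) ↔
      ∃ U W : Submodule Aᵐᵒᵖ (n → A), IsCompl U W ∧
        IsTotallyIsotropic A n U ∧ IsTotallyIsotropic A n W := by
  constructor
  · rintro ⟨e, he, hσ⟩
    have hP : IsIdempotentElem (mulVecBilin A Aᵐᵒᵖ e) :=
      LinearMap.ext fun x => by simp [Module.End.mul_apply, mulVec_mulVec, he.eq]
    exact ⟨_, _, LinearMap.IsIdempotentElem.isCompl hP,
      isTotallyIsotropic_range_mulVecBilin he hσ, isTotallyIsotropic_ker_mulVecBilin hσ⟩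
  · rintro ⟨U, W, hUW, hU, hW⟩
    set p := U.projection W hUW
    set e : Matrix n n A := Matrix.of fun i j => p (Pi.single j 1) i
    have hp : ∀ x, p x = e *ᵥ x := fun x => LinearMap.congr_fun p.eq_mulVecBilin x
    refine ⟨e, ext_iff_mulVec.mpr fun v => ?_, ext_iff_mulVec.mpr fun v => funext fun i => ?_⟩
    · rw [← mulVec_mulVec, ← hp, ← hp]
      exact LinearMap.congr_fun (Submodule.isIdempotentElem_projection hUW).eq v
    · have := hU.star_projection_dotProduct_add hUW hW (Pi.single i 1) v
      rw [hp, hp, star_mulVec_dotProduct, ← Pi.single_star, star_one, single_one_dotProduct,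
        single_one_dotProduct, single_one_dotProduct] at this
      rw [add_mulVec, one_mulVec]
      exact this

end StarRing

end

theorem statement5_general {A : Type*} [Ring A]
    (σ : A → A)
    (hadd : ∀ x y : A, σ (x + y) = σ x + σ y)
    (hmul : ∀ x y : A, σ (x * y) = σ y * σ x)
    (hinvol : ∀ x : A, σ (σ x) = x)
    (n : ℕ) :
    MatrixInvolutionHyperbolic σ n ↔
      ∃ U W : Submodule Aᵐᵒᵖ (Fin n → A), IsCompl U W ∧
        (∀ x ∈ U, ∀ y ∈ U, ∑ i, σ (x i) * y i = 0) ∧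
        (∀ x ∈ W, ∀ y ∈ W, ∑ i, σ (x i) * y i = 0) :=
  letI : StarRing A :=
    { star := σ, star_involutive := hinvol, star_mul := hmul, star_add := hadd }
  exists_isIdempotentElem_conjTranspose_add_eq_one_iff

/-- **Proposition.** `n × σ` is hyperbolic iff the hermitian form
`f_n((x_i), (y_i)) = Σ x_i^σ y_i` on the right `A`-module `A^n` is hyperbolic. -/
theorem statement5 {K A : Type*} [Field K] (hchar : (2 : K) ≠ 0)
    [Ring A] [Algebra K A] [FiniteDimensional K A]
    (σ : A → A)
    (hadd : ∀ x y : A, σ (x + y) = σ x + σ y)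
    (hsmul : ∀ (c : K) (x : A), σ (c • x) = c • σ x)
    (hmul : ∀ x y : A, σ (x * y) = σ y * σ x)
    (hinvol : ∀ x : A, σ (σ x) = x)
    (n : ℕ) :
    MatrixInvolutionHyperbolic σ n ↔
      ∃ U W : Submodule Aᵐᵒᵖ (Fin n → A), IsCompl U W ∧
        (∀ x ∈ U, ∀ y ∈ U, ∑ i, σ (x i) * y i = 0) ∧
        (∀ x ∈ W, ∀ y ∈ W, ∑ i, σ (x i) * y i = 0) :=
  statement5_general σ hadd hmul hinvol n
end

section
/- Let (R, σ) be a ring with involution such that 2 is invertible in R, and let J be a nilpotent two-sided ideal of R with J^σ = J. Let σ̄ denote the induced involution r + J ↦ r^σ + J on R/J. Then every idempotent ε ∈ R/J satisfying ε^σ̄ + ε = 1 is the image of an idempotent e ∈ R satisfying e^σ + e = 1. In particular, σ is hyperbolic if and only if σ̄ is hyperbolic. -/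
/-!
Lift `ε` to `y` and put `b = y - σ y`, so that `σ b = -b` and `b² - 1` lies in the nilpotent
kernel. Newton's method for `X² - 1`, run in the commutative subring generated by `b` and `1/2`,
gives `v` with `v² = 1` and `b - v` nilpotent, commuting with everything that commutes with `b`;
in particular with `σ v`. Two commuting square roots `u, w` of `1` with nilpotent difference are
equal, since `(u - w)(u + w) = 0` and `u + w = 2u + (w - u)` is a unit. This gives `σ v = -v`
(compare `v` with `-σ v`) and `π v = π b = 2ε - 1`, and `e = (1 + v)/2` is the required lift.
-/

theorem eq_of_mul_self_eq_one_of_isNilpotent_sub {R : Type*} [Ring R] (h2 : IsUnit (2 : R))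
    {u w : R} (hcomm : Commute u w) (hu : u * u = 1) (hw : w * w = 1)
    (h : IsNilpotent (u - w)) : u = w := by
  have hsum : IsUnit (u + w) := by
    have := (isNilpotent_neg_iff.mpr h).isUnit_add_left_of_commute (h2.mul ⟨⟨u, u, hu, hu⟩, rfl⟩)
      ((Commute.ofNat_left 2 (u - w)).symm.mul_right
        ((Commute.refl u).sub_left hcomm.symm)).neg_left
    convert this using 1
    rw [neg_sub, two_mul]; abel
  have hprod : (u - w) * (u + w) = 0 := by
    rw [sub_mul, mul_add, mul_add, hu, hw, hcomm.eq]; abel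
  exact sub_eq_zero.mp (hsum.mul_left_eq_zero.mp hprod)

open Polynomial in
theorem exists_mul_self_eq_one_isNilpotent_sub {A : Type*} [CommRing A] (h2 : IsUnit (2 : A))
    {b : A} (hb : IsNilpotent (b * b - 1)) : ∃ v, v * v = 1 ∧ IsNilpotent (b - v) := by
  have hP : aeval b (X ^ 2 - 1 : ℤ[X]) = b * b - 1 := by simp [sq]
  have hP' : aeval b (derivative (X ^ 2 - 1 : ℤ[X])) = 2 * b := by simp [map_ofNat]
  have hbu : IsUnit b := by
    have := hb.isUnit_add_left_of_commute isUnit_one (Commute.all _ _)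
    exact isUnit_of_mul_isUnit_left (by rwa [add_sub_cancel] at this)
  obtain ⟨v, ⟨hbv, hv⟩, -⟩ := existsUnique_nilpotent_sub_and_aeval_eq_zero (hP ▸ hb)
    (hP' ▸ h2.mul hbu)
  refine ⟨v, ?_, hbv⟩
  simpa [sq, sub_eq_zero] using hv

open scoped IsMulCommutative in
theorem exists_mul_self_eq_one_isNilpotent_sub_commute {R : Type*} [Ring R] (h2 : IsUnit (2 : R))
    {b : R} (hb : IsNilpotent (b * b - 1)) :
    ∃ v, v * v = 1 ∧ IsNilpotent (b - v) ∧ ∀ y, Commute b y → Commute v y := by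
  set c : R := ↑h2.unit⁻¹
  have hc : ∀ y, Commute c y := fun y ↦
    Commute.units_inv_left (by simpa using Commute.ofNat_left 2 y)
  set A := Subring.closure ({b, c} : Set R)
  have : IsMulCommutative A := Subring.isMulCommutative_closure <| by
    rintro x (rfl | rfl) y (rfl | rfl)
    exacts [rfl, ((hc _).symm).eq, (hc _).eq, rfl]
  have h2A : IsUnit (2 : A) :=
    ⟨⟨2, ⟨c, Subring.subset_closure (by simp)⟩, Subtype.ext h2.mul_val_inv,
      Subtype.ext h2.val_inv_mul⟩, rfl⟩
  obtain ⟨v, hv, hbv⟩ := exists_mul_self_eq_one_isNilpotent_sub h2A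
    (b := ⟨b, Subring.subset_closure (by simp)⟩)
    ((IsNilpotent.map_iff (f := A.subtype) Subtype.val_injective).mp hb)
  refine ⟨v, congrArg Subtype.val hv, hbv.map A.subtype, fun y hy ↦ ?_⟩
  have hy' : y ∈ Subring.centralizer {b, c} := by
    rintro _ (rfl | rfl)
    exacts [hy.eq, (hc y).eq]
  exact ((Subring.closure_le_centralizer_centralizer _ v.2) y hy').symm

theorem IsNilpotent.star {R : Type*} [Semiring R] [StarRing R] {x : R} (h : IsNilpotent x) :
    IsNilpotent (star x) := by
  obtain ⟨n, hn⟩ := h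
  exact ⟨n, by rw [← star_pow, hn, star_zero]⟩

section StarRing

variable {R : Type*} [Ring R] [StarRing R]

theorem exists_mul_self_eq_one_star_eq_neg_isNilpotent_sub (h2 : IsUnit (2 : R)) {b : R}
    (hb : star b = -b) (hb2 : IsNilpotent (b * b - 1)) :
    ∃ v, v * v = 1 ∧ star v = -v ∧ IsNilpotent (b - v) ∧ Commute b v := by
  obtain ⟨v, hv, hbv, hcomm⟩ := exists_mul_self_eq_one_isNilpotent_sub_commute h2 hb2
  have hvb : Commute v b := hcomm b (Commute.refl b)
  have hbv' : Commute b (star v) := by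
    simpa [hb] using hvb.star_star.symm
  have hvv' : Commute v (star v) := hcomm _ hbv'
  refine ⟨v, hv, ?_, hbv, hvb.symm⟩
  have : v = -star v := by
    refine eq_of_mul_self_eq_one_of_isNilpotent_sub h2 hvv'.neg_right hv
      (by rw [neg_mul_neg, ← star_mul, hv, star_one]) ?_
    rw [sub_neg_eq_add]
    have hsum : v + star v = -((b - v) + star (b - v)) := by
      rw [star_sub, hb]; abel
    rw [hsum, isNilpotent_neg_iff]
    refine Commute.isNilpotent_add ?_ hbv hbv.star
    rw [star_sub, hb]
    exact ((Commute.refl b).neg_right.sub_right hbv').sub_left (hvb.neg_right.sub_right hvv')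
  exact (neg_eq_iff_eq_neg.mpr this).symm

theorem exists_isIdempotentElem_star_add_eq_one_of_mul_self_eq_one (h2 : IsUnit (2 : R)) {v : R}
    (hv : v * v = 1) (hv' : star v = -v) :
    ∃ e, IsIdempotentElem e ∧ star e + e = 1 ∧ 2 * e = 1 + v := by
  set c : R := ↑h2.unit⁻¹
  have hc2 : 2 * c = 1 := h2.mul_val_inv
  have h2e : 2 * (c * (1 + v)) = 1 + v := by rw [← mul_assoc, hc2, one_mul]
  refine ⟨c * (1 + v), ?_, ?_, h2e⟩ <;> generalize c * (1 + v) = e at h2e ⊢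
  · refine (h2.mul h2).mul_left_cancel ?_
    rw [(Commute.ofNat_left 2 e).mul_mul_mul_comm, h2e, mul_assoc, h2e]
    linear_combination (norm := noncomm_ring) hv
  · refine h2.mul_left_cancel ?_
    have h2star : 2 * star e = star (2 * e) := by
      rw [star_mul, star_ofNat, (Commute.ofNat_left 2 _).eq]
    rw [mul_add, h2star, h2e, star_add, star_one, hv']
    noncomm_ring

theorem exists_isIdempotentElem_star_add_eq_one_of_ker_isNilpotent {S : Type*} [Ring S] (π : R →+* S)
    (hπ : ∀ x ∈ RingHom.ker π, IsNilpotent x) (h2 : IsUnit (2 : R)) (y : R)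
    (hy : π (y * y) = π y) (hy' : π (star y + y) = 1) :
    ∃ e, IsIdempotentElem e ∧ star e + e = 1 ∧ π e = π y := by
  set b := y - star y
  have hb : star b = -b := by simp [b]
  have h2S : IsUnit (2 : S) := map_ofNat π 2 ▸ h2.map π
  have hπb : π b = 2 * π y - 1 := by
    rw [map_sub, ← hy', map_add]; noncomm_ring
  have hπb2 : π b * π b = 1 := by
    rw [map_mul] at hy
    rw [hπb]
    linear_combination (norm := noncomm_ring) 4 * hy
  obtain ⟨v, hv, hv', hbv, hcomm⟩ :=
    exists_mul_self_eq_one_star_eq_neg_isNilpotent_sub h2 hb (hπ _ (by simp [hπb2]))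
  have hπv : π b = π v :=
    eq_of_mul_self_eq_one_of_isNilpotent_sub h2S (hcomm.map π) hπb2
      (by rw [← map_mul, hv, map_one]) (by simpa using hbv.map π)
  obtain ⟨e, he, he', h2e⟩ := exists_isIdempotentElem_star_add_eq_one_of_mul_self_eq_one h2 hv hv'
  refine ⟨e, he, he', h2S.mul_left_cancel ?_⟩
  have := congrArg π h2e
  rw [map_mul, map_add, map_one, ← hπv, hπb, map_ofNat] at this
  rw [this]; abel

end StarRing

theorem statement10_general {R S : Type*} [Ring R] [Ring S] (h2 : IsUnit (2 : R))
    (σ : R → R)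
    (hadd : ∀ x y : R, σ (x + y) = σ x + σ y)
    (hmul : ∀ x y : R, σ (x * y) = σ y * σ x)
    (hinvol : ∀ x : R, σ (σ x) = x)
    (π : R →+* S) (hsurj : Function.Surjective π)
    -- the kernel `J` of `π` is nilpotent
    (hnilp : ∃ n : ℕ, 0 < n ∧ ∀ f : Fin n → R, (∀ i, π (f i) = 0) →
      (List.ofFn f).prod = 0)
    -- `σ̄` is the involution induced by `σ` on `S ≅ R/J`
    (σ' : S → S) (hcompat : ∀ r : R, π (σ r) = σ' (π r)) :
    (∀ ε : S, ε * ε = ε → σ' ε + ε = 1 →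
      ∃ e : R, e * e = e ∧ σ e + e = 1 ∧ π e = ε) ∧
    ((∃ e : R, e * e = e ∧ σ e + e = 1) ↔ ∃ ε : S, ε * ε = ε ∧ σ' ε + ε = 1) := by
  let _ : StarRing R :=
    { star := σ, star_involutive := hinvol, star_mul := hmul, star_add := hadd }
  obtain ⟨n, -, hn⟩ := hnilp
  have hker : ∀ x ∈ RingHom.ker π, IsNilpotent x := fun x hx ↦
    ⟨n, by simpa using hn (fun _ ↦ x) (fun _ ↦ hx)⟩
  have lift : ∀ ε : S, ε * ε = ε → σ' ε + ε = 1 →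
      ∃ e : R, e * e = e ∧ σ e + e = 1 ∧ π e = ε := by
    intro ε hε hε'
    obtain ⟨y, rfl⟩ := hsurj ε
    exact exists_isIdempotentElem_star_add_eq_one_of_ker_isNilpotent π hker h2 y (by rw [map_mul, hε])
      (by rw [map_add, ← hε', ← hcompat]; rfl)
  refine ⟨lift, ⟨fun ⟨e, he, he'⟩ ↦ ⟨π e, ?_, ?_⟩, fun ⟨ε, hε, hε'⟩ ↦ ?_⟩⟩
  · rw [← map_mul, he]
  · rw [← hcompat, ← map_add, he', map_one]
  · obtain ⟨e, he, he', -⟩ := lift ε hε hε'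
    exact ⟨e, he, he'⟩

/-- **Lemma.** Let `(R,σ)` be a ring with involution in which `2` is invertible, and let
`π : R → S` be a surjective ring homomorphism whose kernel `J` is a nilpotent two-sided
ideal stable under `σ` (so `S ≅ R/J`), and let `σ̄` be the induced involution on `S`.
Then every idempotent `ε ∈ S` with `ε^σ̄ + ε = 1` lifts to an idempotent `e ∈ R` with
`e^σ + e = 1`; in particular `σ` is hyperbolic iff `σ̄` is hyperbolic. -/
theorem statement10 {R S : Type*} [Ring R] [Ring S] (h2 : IsUnit (2 : R))
    (σ : R → R)
    (hadd : ∀ x y : R, σ (x + y) = σ x + σ y)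
    (hmul : ∀ x y : R, σ (x * y) = σ y * σ x)
    (hinvol : ∀ x : R, σ (σ x) = x)
    (π : R →+* S) (hsurj : Function.Surjective π)
    -- the kernel `J` of `π` is nilpotent
    (hnilp : ∃ n : ℕ, 0 < n ∧ ∀ f : Fin n → R, (∀ i, π (f i) = 0) →
      (List.ofFn f).prod = 0)
    -- `J^σ = J`
    (hstable : ∀ r : R, π r = 0 → π (σ r) = 0)
    -- `σ̄` is the involution induced by `σ` on `S ≅ R/J`
    (σ' : S → S) (hcompat : ∀ r : R, π (σ r) = σ' (π r)) :
    (∀ ε : S, ε * ε = ε → σ' ε + ε = 1 →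
      ∃ e : R, e * e = e ∧ σ e + e = 1 ∧ π e = ε) ∧
    ((∃ e : R, e * e = e ∧ σ e + e = 1) ↔ ∃ ε : S, ε * ε = ε ∧ σ' ε + ε = 1) :=
  statement10_general h2 σ hadd hmul hinvol π hsurj hnilp σ' hcompat
end

section
/- Let K be a field of characteristic ≠ 2, let (A, σ) be a finite-dimensional K-algebra with involution, and let α ∈ K^× be such that neither α nor −α is a square in K. If both base-changed involutions σ ⊗ id on A ⊗_K K(√α) and on A ⊗_K K(√−α) are hyperbolic, then 2×σ (the involution (a_ij) ↦ (a_ji^σ) on M_2(A)) is hyperbolic. -/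
/-!
Hyperbolicity of `σ ⊗ id` over `K(√β)` yields skew elements `s, t` of `A` with `st = -ts` and
`s² + βt² = 1`: write the idempotent as `a ⊗ 1 + b ⊗ √β` and put `s = 2a - 1`, `t = 2b`.
From such a pair one builds `n` with `σ(n) n = n σ(n) = -β`, splitting along the Fitting
decomposition of `t²` inside the commutative algebra `K[t²]`. Where `t²` is invertible, take
`t (s + 1) t⁻²`. Where `t²` is nilpotent, `1 - βt² = s²` is unipotent, so rescaling `s` by an
inverse square root of it gives a skew `u` with `u² = 1`, and `((1 - β) + (1 + β) u) / 2` works.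
For `β = α` and `β = -α` this gives `n₁, n₂`; then `m = α⁻¹ σ(n₁) n₂` has
`σ(m) m = m σ(m) = -1`, and `½ [[1, m], [-σ(m), 1]]` is the required idempotent of `M₂(A)`.
-/

open Module TensorProduct Polynomial

/-- A ring with involution is hyperbolic if it contains an idempotent `e` with
`e^σ + e = 1`. -/
def InvolutionHyperbolic {B : Type*} [Ring B] (τ : B → B) : Prop :=
  ∃ e : B, e * e = e ∧ τ e + e = 1

section CommRing

variable {R : Type*} [CommRing R]

theorem exists_fitting_decomposition [IsArtinianRing R] (r : R) :
    ∃ e c : R, IsIdempotentElem e ∧ c * r = e ∧ c * e = c ∧ IsNilpotent (r * (1 - e)) := by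
  obtain ⟨n, y, hy⟩ := IsArtinian.exists_pow_succ_smul_dvd r (1 : R)
  rw [smul_eq_mul, smul_eq_mul, mul_one, pow_succ, mul_assoc] at hy
  have hstable (k : ℕ) : r ^ n * (r * y) ^ k = r ^ n := by
    induction k with
    | zero => rw [pow_zero, mul_one]
    | succ k ih => rw [pow_succ, ← mul_assoc, ih, hy]
  have he : IsIdempotentElem (r ^ n * y ^ n) := by
    unfold IsIdempotentElem
    linear_combination y ^ n * hstable n
  refine ⟨r ^ n * y ^ n, r ^ n * y ^ n * y, he, ?_, ?_, ⟨n + 1, ?_⟩⟩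
  · linear_combination y ^ n * hstable 1
  · linear_combination y * he.eq
  · rw [mul_pow, he.one_sub.pow_succ_eq]
    linear_combination (-r) * hstable n

theorem exists_mul_sq_eq_one_of_isNilpotent (h2 : IsUnit (2 : R)) {ν : R} (hν : IsNilpotent ν) :
    ∃ χ : R, (1 - ν) * χ ^ 2 = 1 := by
  obtain ⟨χ, -, hχ⟩ := (existsUnique_nilpotent_sub_and_aeval_eq_zero
    (P := C (1 - ν) * X ^ 2 - 1) (x := (1 : R)) (by simpa using hν.neg)
    (by simpa [one_add_one_eq_two] using hν.isUnit_one_sub.mul h2)).exists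
  exact ⟨χ, by simpa [sub_eq_zero] using hχ⟩

/-- `w` is an inverse square root of `1 - b r` on the part `1 - e` where `r` is nilpotent. -/
theorem exists_fitting_decomposition_and_sqrt [IsArtinianRing R] (h2 : IsUnit (2 : R))
    (b r : R) : ∃ e c w : R, e * e = e ∧ c * r = e ∧ c * e = c ∧
      w * w * (1 - b * r) = 1 - e ∧ w * e = 0 := by
  obtain ⟨e, c, he, hcr, hce, hnil⟩ := exists_fitting_decomposition r
  obtain ⟨χ, hχ⟩ :=
    exists_mul_sq_eq_one_of_isNilpotent h2 ((Commute.all b _).isNilpotent_mul_left hnil)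
  refine ⟨e, c, χ * (1 - e), he.eq, hcr, hce, ?_, ?_⟩
  · linear_combination (1 - e) * hχ + χ ^ 2 * he.eq
  · linear_combination (-χ) * he.eq

end CommRing

theorem map_one_of_antimul_involutive {M : Type*} [MulOneClass M] {σ : M → M}
    (hmul : ∀ x y, σ (x * y) = σ y * σ x) (hinvol : ∀ x, σ (σ x) = x) : σ 1 = 1 :=
  calc σ 1 = σ 1 * σ (σ 1) := by rw [hinvol, mul_one]
    _ = 1 := by rw [← hmul, mul_one, hinvol]

theorem commute_mul_self_of_anticommute {R : Type*} [Ring R] {s t : R}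
    (hst : s * t = -(t * s)) : Commute s (t * t) := by
  rw [Commute, SemiconjBy, ← mul_assoc, hst, neg_mul, mul_assoc, hst, mul_neg, neg_neg, mul_assoc]

def IsSimilitude {A : Type*} [Mul A] (σ : A → A) (μ n : A) : Prop :=
  σ n * n = μ ∧ n * σ n = μ

section Algebra

variable {K A : Type*} [Field K] [Ring A] [Algebra K A]

namespace AdjoinRoot

noncomputable def basisTwo (β : K) : Basis (Fin 2) K (AdjoinRoot (X ^ 2 - C β)) :=
  (powerBasis' (monic_X_pow_sub_C β two_ne_zero)).basis.reindex (finCongr natDegree_X_pow_sub_C)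

theorem basisTwo_apply (β : K) (i : Fin 2) : basisTwo β i = root _ ^ (i : ℕ) := by
  rw [basisTwo, Basis.reindex_apply, PowerBasis.coe_basis]
  rfl

theorem root_X_pow_two_sub_C_sq (β : K) : root (X ^ 2 - C β) ^ 2 = algebraMap K _ β := by
  have h := eval₂_root (X ^ 2 - C β)
  rwa [eval₂_sub, eval₂_pow, eval₂_X, eval₂_C, sub_eq_zero, ← algebraMap_eq] at h

end AdjoinRoot

section QuadraticBaseChange

open AdjoinRoot

variable (β : K)

theorem tensorBasisTwo_equivFun_symm_apply (v : Fin 2 → A) :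
    (Algebra.TensorProduct.basis A (basisTwo β)).equivFun.symm v
      = v 0 ⊗ₜ 1 + v 1 ⊗ₜ root (X ^ 2 - C β) := by
  simp [Basis.equivFun_symm_apply, Fin.sum_univ_two, Algebra.TensorProduct.basis_apply,
    basisTwo_apply, smul_tmul']

theorem exists_eq_tmul_one_add_tmul_root (z : A ⊗[K] AdjoinRoot (X ^ 2 - C β)) :
    ∃ x y : A, z = x ⊗ₜ 1 + y ⊗ₜ root (X ^ 2 - C β) :=
  ⟨_, _, by rw [← tensorBasisTwo_equivFun_symm_apply, LinearEquiv.symm_apply_apply]⟩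

variable {β}

theorem tmul_one_add_tmul_root_inj {x y x' y' : A} :
    x ⊗ₜ 1 + y ⊗ₜ root (X ^ 2 - C β) = x' ⊗ₜ[K] 1 + y' ⊗ₜ root (X ^ 2 - C β) ↔
      x = x' ∧ y = y' := by
  calc _ ↔ ![x, y] = ![x', y'] := by
        rw [← (Algebra.TensorProduct.basis A (basisTwo β)).equivFun.symm.injective.eq_iff,
          tensorBasisTwo_equivFun_symm_apply, tensorBasisTwo_equivFun_symm_apply]
        rfl
    _ ↔ _ := by simp [funext_iff, Fin.forall_fin_two]

theorem tmul_one_add_tmul_root_mul (x y x' y' : A) :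
    (x ⊗ₜ 1 + y ⊗ₜ root (X ^ 2 - C β)) * (x' ⊗ₜ[K] 1 + y' ⊗ₜ root (X ^ 2 - C β)) =
      (x * x' + algebraMap K A β * (y * y')) ⊗ₜ 1 + (x * y' + y * x') ⊗ₜ root _ := by
  have hβ : (y * y') ⊗ₜ[K] algebraMap K (AdjoinRoot (X ^ 2 - C β)) β
      = (algebraMap K A β * (y * y')) ⊗ₜ 1 := by
    rw [Algebra.algebraMap_eq_smul_one, tmul_smul, smul_tmul', Algebra.smul_def]
  simp only [add_mul, mul_add, Algebra.TensorProduct.tmul_mul_tmul, mul_one, one_mul, ← sq,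
    root_X_pow_two_sub_C_sq, one_pow, hβ, add_tmul]
  abel

theorem exists_skew_anticommute_of_involutionHyperbolic {σ : A →ₗ[K] A} (hone : σ 1 = 1)
    (h : InvolutionHyperbolic (LinearMap.rTensor (AdjoinRoot (X ^ 2 - C β)) σ :
      A ⊗[K] AdjoinRoot (X ^ 2 - C β) → A ⊗[K] AdjoinRoot (X ^ 2 - C β))) :
    ∃ s t : A, σ s = -s ∧ σ t = -t ∧ s * t = -(t * s) ∧
      s * s + algebraMap K A β * (t * t) = 1 := by
  obtain ⟨e, he, heσ⟩ := h
  obtain ⟨a, b, rfl⟩ := exists_eq_tmul_one_add_tmul_root β e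
  have hone' : (1 : A ⊗[K] AdjoinRoot (X ^ 2 - C β)) = 1 ⊗ₜ 1 + 0 ⊗ₜ root _ := by
    rw [zero_tmul, add_zero]
    rfl
  rw [tmul_one_add_tmul_root_mul, tmul_one_add_tmul_root_inj] at he
  rw [map_add, LinearMap.rTensor_tmul, LinearMap.rTensor_tmul, add_add_add_comm, ← add_tmul,
    ← add_tmul, hone', tmul_one_add_tmul_root_inj] at heσ
  obtain ⟨ha, hb⟩ := he
  obtain ⟨hσa, hσb⟩ := heσ
  refine ⟨a + a - 1, b + b, ?_, ?_, ?_, ?_⟩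
  · rw [map_sub, map_add, eq_sub_of_add_eq hσa, hone]
    abel
  · rw [map_add, eq_neg_of_add_eq_zero_left hσb]
    abel
  · have h : (a + a - 1) * (b + b) + (b + b) * (a + a - 1) = 4 * (a * b + b * a - b) := by
      noncomm_ring
    rw [hb, sub_self, mul_zero] at h
    exact eq_neg_of_add_eq_zero_left h
  · have h : (a + a - 1) * (a + a - 1) + algebraMap K A β * ((b + b) * (b + b)) - 1
        = 4 * (a * a + algebraMap K A β * (b * b) - a) := by
      noncomm_ring
    rwa [ha, sub_self, mul_zero, sub_eq_zero] at h

end QuadraticBaseChange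

theorem exists_fitting_decomposition_and_sqrt_of_mem_adjoin [FiniteDimensional K A]
    (hchar : (2 : K) ≠ 0) (β : K) (τ : A) :
    ∃ f ∈ Algebra.adjoin K {τ}, ∃ c ∈ Algebra.adjoin K {τ}, ∃ w ∈ Algebra.adjoin K {τ},
      f * f = f ∧ c * τ = f ∧ c * f = c ∧ w * w * (1 - algebraMap K A β * τ) = 1 - f ∧
        w * f = 0 := by
  let S := Algebra.adjoin K {τ}
  have : IsArtinianRing S := .of_finite K S
  have h2 : IsUnit (2 : S) := by
    simpa only [map_ofNat] using (IsUnit.mk0 _ hchar).map (algebraMap K S)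
  obtain ⟨f, c, w, hf, hcτ, hcf, hw, hwf⟩ := exists_fitting_decomposition_and_sqrt h2
    (algebraMap K S β) ⟨τ, Algebra.self_mem_adjoin_singleton K τ⟩
  exact ⟨f, f.2, c, c.2, w, w.2, congrArg Subtype.val hf, congrArg Subtype.val hcτ,
    congrArg Subtype.val hcf, congrArg Subtype.val hw, congrArg Subtype.val hwf⟩

section Involution

variable {σ : A →ₗ[K] A}

theorem map_eq_self_of_mem_adjoin_singleton (hmul : ∀ x y, σ (x * y) = σ y * σ x)
    (hone : σ 1 = 1) {a x : A} (ha : σ a = a) (hx : x ∈ Algebra.adjoin K {a}) : σ x = x := by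
  induction hx using Algebra.adjoin_induction with
  | mem y hy => rwa [Set.mem_singleton_iff.mp hy]
  | algebraMap k => rw [Algebra.algebraMap_eq_smul_one, map_smul, hone]
  | add y z _ _ hy hz => rw [map_add, hy, hz]
  | mul y z hyS hzS hy hz =>
    rw [hmul, hy, hz]
    exact (Algebra.commute_of_mem_adjoin_singleton_of_commute hyS
      (Algebra.commute_of_mem_adjoin_self hzS).symm).eq

theorem IsSimilitude.add_of_orthogonal (hmul : ∀ x y, σ (x * y) = σ y * σ x) {f m n μ : A}
    (hf : σ f = f) (hfm : f * m = m) (hmf : m * f = m) (hfn : f * n = 0) (hnf : n * f = 0)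
    (hm : IsSimilitude σ (μ * f) m) (hn : IsSimilitude σ (μ * (1 - f)) n) :
    IsSimilitude σ μ (m + n) := by
  have hσmf : σ m * f = σ m := by rw [← hf, ← hmul, hfm]
  have hfσm : f * σ m = σ m := by rw [← hf, ← hmul, hmf]
  have hσnf : σ n * f = 0 := by rw [← hf, ← hmul, hfn, map_zero]
  have hfσn : f * σ n = 0 := by rw [← hf, ← hmul, hnf, map_zero]
  have hσmn : σ m * n = 0 := by rw [← hσmf, mul_assoc, hfn, mul_zero]
  have hσnm : σ n * m = 0 := by rw [← hfm, ← mul_assoc, hσnf, zero_mul]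
  have hmσn : m * σ n = 0 := by rw [← hmf, mul_assoc, hfσn, mul_zero]
  have hnσm : n * σ m = 0 := by rw [← hfσm, ← mul_assoc, hnf, zero_mul]
  constructor
  · rw [map_add, add_mul, mul_add, mul_add, hm.1, hn.1, hσmn, hσnm]
    noncomm_ring
  · rw [map_add, add_mul, mul_add, mul_add, hm.2, hn.2, hmσn, hnσm]
    noncomm_ring

theorem IsSimilitude.apply_mul (hmul : ∀ x y, σ (x * y) = σ y * σ x)
    (hinvol : ∀ x, σ (σ x) = x) {μ₁ μ₂ : K} {n₁ n₂ : A}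
    (h₁ : IsSimilitude σ (algebraMap K A μ₁) n₁) (h₂ : IsSimilitude σ (algebraMap K A μ₂) n₂) :
    IsSimilitude σ (algebraMap K A (μ₁ * μ₂)) (σ n₁ * n₂) := by
  rw [IsSimilitude, hmul, hinvol, map_mul]
  constructor
  · rw [mul_assoc, ← mul_assoc n₁, h₁.2, ← mul_assoc, ← Algebra.commutes, mul_assoc, h₂.1]
  · rw [mul_assoc, ← mul_assoc n₂, h₂.2, ← mul_assoc, ← Algebra.commutes, mul_assoc, h₁.1,
      Algebra.commutes]

theorem IsSimilitude.smul {μ : K} {n : A} (h : IsSimilitude σ (algebraMap K A μ) n) (k : K) :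
    IsSimilitude σ (algebraMap K A (k ^ 2 * μ)) (k • n) := by
  rw [IsSimilitude, map_smul, smul_mul_smul_comm, smul_mul_smul_comm, h.1, h.2, ← sq,
    Algebra.smul_def, ← map_mul]
  exact ⟨rfl, rfl⟩

theorem isSimilitude_smul_add_smul {g u : A} (hg : σ g = g) (hu : σ u = -u) (hgu : g * u = u)
    (hug : u * g = u) (huu : u * u = g) (x y : K) :
    IsSimilitude σ (algebraMap K A (x ^ 2 - y ^ 2) * g) (x • g + y • u) := by
  have hgg : g * g = g := by
    nth_rw 1 [← huu]
    rw [mul_assoc, hug, huu]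
  have hσ : σ (x • g + y • u) = x • g - y • u := by
    rw [map_add, map_smul, map_smul, hg, hu, smul_neg, sub_eq_add_neg]
  rw [← Algebra.smul_def, IsSimilitude, hσ]
  constructor
  · simp only [sub_mul, mul_add, smul_mul_smul_comm, hgg, hgu, hug, huu]
    module
  · simp only [mul_sub, add_mul, smul_mul_smul_comm, hgg, hgu, hug, huu]
    module

theorem isSimilitude_smul_one_sub_add_smul_mul (hmul : ∀ x y, σ (x * y) = σ y * σ x)
    (hone : σ 1 = 1) {s w f : A} (hs : σ s = -s) (hw : σ w = w) (hf : σ f = f)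
    (hsw : Commute s w) (hsf : Commute s f) (hfw : f * w = 0) (hwf : w * f = 0)
    (hsq : s * s * (w * w) = 1 - f) (x y : K) :
    IsSimilitude σ (algebraMap K A (x ^ 2 - y ^ 2) * (1 - f)) (x • (1 - f) + y • (s * w)) := by
  refine isSimilitude_smul_add_smul (by rw [map_sub, hone, hf]) ?_ ?_ ?_ ?_ x y
  · rw [hmul, hs, hw, mul_neg, hsw.eq]
  · rw [← mul_assoc, ← ((Commute.one_right s).sub_right hsf).eq, mul_assoc, sub_mul, one_mul,
      hfw, sub_zero]
  · rw [mul_assoc, mul_sub, mul_one, hwf, sub_zero]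
  · rw [mul_assoc, ← mul_assoc w, ← hsw.eq, mul_assoc, ← mul_assoc, hsq]

theorem isSimilitude_mul_add_one_mul (hmul : ∀ x y, σ (x * y) = σ y * σ x) (hone : σ 1 = 1)
    {s t c : A} {β : K} (hs : σ s = -s) (ht : σ t = -t) (hc : σ c = c)
    (hsτ : Commute s (t * t)) (hcs : Commute c s) (hct : Commute c t)
    (hsq : s * s + algebraMap K A β * (t * t) = 1) :
    IsSimilitude σ (algebraMap K A (-β) * (c * (t * t)) ^ 2) (t * (s + 1) * c) := by
  have hσ : σ (t * (s + 1) * c) = -(c * (1 - s) * t) := by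
    rw [hmul, hmul, map_add, hs, hone, ht, hc]
    noncomm_ring
  have hss : s * s = 1 - algebraMap K A β * (t * t) := eq_sub_of_add_eq hsq
  have h₁ : (1 - s) * (s + 1) = β • (t * t) := by
    rw [Algebra.smul_def, ← sub_sub_cancel 1 (algebraMap K A β * (t * t)), ← hss]
    noncomm_ring
  have h₂ : (s + 1) * (1 - s) = β • (t * t) := by
    rw [Algebra.smul_def, ← sub_sub_cancel 1 (algebraMap K A β * (t * t)), ← hss]
    noncomm_ring
  rw [IsSimilitude, hσ, ← Algebra.smul_def, neg_smul]
  constructor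
  · calc -(c * (1 - s) * t) * (t * (s + 1) * c) = -(c * ((1 - s) * (t * t)) * (s + 1) * c) := by
          noncomm_ring
      _ = -(c * (t * t) * ((1 - s) * (s + 1)) * c) := by
          rw [((Commute.one_left _).sub_left hsτ).eq]
          noncomm_ring
      _ = -(β • (c * (t * t)) ^ 2) := by
          simp only [h₁, mul_smul_comm, smul_mul_assoc, sq, mul_assoc, hct.left_comm, hct.eq]
  · calc t * (s + 1) * c * -(c * (1 - s) * t) = -(t * ((s + 1) * ((c * c) * (1 - s))) * t) := by
          noncomm_ring
      _ = -(t * ((s + 1) * (1 - s)) * (c * c) * t) := by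
          rw [((Commute.one_right _).sub_right (hcs.mul_left hcs)).eq]
          noncomm_ring
      _ = -(β • (c * (t * t)) ^ 2) := by
          simp only [h₂, mul_smul_comm, smul_mul_assoc, sq, mul_assoc, hct.left_comm, hct.eq]

theorem exists_isSimilitude_of_skew_anticommute [FiniteDimensional K A] (hchar : (2 : K) ≠ 0)
    (hmul : ∀ x y, σ (x * y) = σ y * σ x) (hone : σ 1 = 1) {s t : A} {β : K}
    (hs : σ s = -s) (ht : σ t = -t) (hst : s * t = -(t * s))
    (hsq : s * s + algebraMap K A β * (t * t) = 1) :
    ∃ n, IsSimilitude σ (algebraMap K A (-β)) n := by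
  have hsτ := commute_mul_self_of_anticommute hst
  have hS : ∀ x ∈ Algebra.adjoin K {t * t}, Commute x s ∧ Commute x t ∧ σ x = x := fun x hx =>
    ⟨(Algebra.commute_of_mem_adjoin_singleton_of_commute hx hsτ).symm,
      (Algebra.commute_of_mem_adjoin_singleton_of_commute hx
        ((Commute.refl t).mul_right (.refl t))).symm,
      map_eq_self_of_mem_adjoin_singleton hmul hone (by rw [hmul, ht, neg_mul_neg]) hx⟩
  have hSS : ∀ x ∈ Algebra.adjoin K {t * t}, ∀ y ∈ Algebra.adjoin K {t * t}, Commute x y :=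
    fun x hx y hy => Algebra.commute_of_mem_adjoin_singleton_of_commute hy
      (Algebra.commute_of_mem_adjoin_self hx).symm
  obtain ⟨f, hfS, c, hcS, w, hwS, hf, hcτ, hcf, hw, hwf⟩ :=
    exists_fitting_decomposition_and_sqrt_of_mem_adjoin hchar β (t * t)
  obtain ⟨hfs, hft, hfσ⟩ := hS f hfS
  obtain ⟨hcs, hct, hcσ⟩ := hS c hcS
  obtain ⟨hws, -, hwσ⟩ := hS w hwS
  have hfc : f * c = c := by rw [(hSS f hfS c hcS).eq, hcf]
  have hfw : f * w = 0 := by rw [(hSS f hfS w hwS).eq, hwf]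
  have hunit : IsSimilitude σ (algebraMap K A (-β) * f) (t * (s + 1) * c) := by
    have h := isSimilitude_mul_add_one_mul hmul hone hs ht hcσ hsτ hcs hct hsq
    rwa [hcτ, sq, hf] at h
  have hnil : IsSimilitude σ (algebraMap K A (-β) * (1 - f))
      (((1 - β) / 2) • (1 - f) + ((1 + β) / 2) • (s * w)) := by
    have hsw : s * s * (w * w) = 1 - f := by
      rw [eq_sub_of_add_eq hsq, ← hw]
      exact ((Commute.one_left _).sub_left ((Algebra.commute_algebraMap_left β _).mul_left
        (hSS _ (Algebra.self_mem_adjoin_singleton K _) _ (mul_mem hwS hwS)))).eq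
    have h := isSimilitude_smul_one_sub_add_smul_mul hmul hone hs hwσ hfσ hws.symm hfs.symm hfw
      hwf hsw ((1 - β) / 2) ((1 + β) / 2)
    rwa [show ((1 - β) / 2) ^ 2 - ((1 + β) / 2) ^ 2 = -β by field_simp; ring] at h
  refine ⟨_, hunit.add_of_orthogonal hmul hfσ ?_ ?_ ?_ ?_ hnil⟩
  · rw [← mul_assoc, ← mul_assoc, hft.eq, mul_assoc t, (hfs.add_right (Commute.one_right _)).eq,
      mul_assoc, mul_assoc, hfc, ← mul_assoc]
  · rw [mul_assoc, hcf]
  · rw [mul_add, mul_smul_comm, mul_smul_comm, mul_sub, mul_one, hf, sub_self, ← mul_assoc,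
      hfs.eq, mul_assoc, hfw, mul_zero, smul_zero, smul_zero, add_zero]
  · rw [add_mul, smul_mul_assoc, smul_mul_assoc, sub_mul, one_mul, hf, sub_self, mul_assoc,
      hwf, mul_zero, smul_zero, smul_zero, add_zero]

theorem matrixInvolutionHyperbolic_two_of_isSimilitude (hchar : (2 : K) ≠ 0)
    (hinvol : ∀ x, σ (σ x) = x) (hone : σ 1 = 1) {m : A} (hm : IsSimilitude σ (-1) m) :
    MatrixInvolutionHyperbolic (fun x => σ x) 2 := by
  have half : (2⁻¹ : K) + 2⁻¹ = 1 := by rw [← two_mul, mul_inv_cancel₀ hchar]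
  refine ⟨(2⁻¹ : K) • !![1, m; -σ m, 1], ?_, ?_⟩
  · ext i j
    fin_cases i <;> fin_cases j <;>
      simp [Matrix.mul_apply, Fin.sum_univ_two, hm.1, hm.2, ← neg_add, ← add_smul, half]
  · ext i j
    fin_cases i <;> fin_cases j <;> simp [hinvol, hone, ← add_smul, half]

end Involution

end Algebra

theorem statement12_general {K A : Type*} [Field K] (hchar : (2 : K) ≠ 0)
    [Ring A] [Algebra K A] [FiniteDimensional K A]
    (σ : A →ₗ[K] A)
    (hmul : ∀ x y : A, σ (x * y) = σ y * σ x)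
    (hinvol : ∀ x : A, σ (σ x) = x)
    (α : K) (hα : ¬ IsSquare α)
    (h₁ : InvolutionHyperbolic
      (LinearMap.rTensor (AdjoinRoot (X ^ 2 - C α)) σ :
        A ⊗[K] AdjoinRoot (X ^ 2 - C α) → A ⊗[K] AdjoinRoot (X ^ 2 - C α)))
    (h₂ : InvolutionHyperbolic
      (LinearMap.rTensor (AdjoinRoot (X ^ 2 - C (-α))) σ :
        A ⊗[K] AdjoinRoot (X ^ 2 - C (-α)) → A ⊗[K] AdjoinRoot (X ^ 2 - C (-α)))) :
    MatrixInvolutionHyperbolic (fun x => σ x) 2 := by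
  have hone : σ 1 = 1 := map_one_of_antimul_involutive hmul hinvol
  have hα0 : α ≠ 0 := by
    rintro rfl
    exact hα IsSquare.zero
  obtain ⟨s₁, t₁, hs₁, ht₁, hst₁, hsq₁⟩ := exists_skew_anticommute_of_involutionHyperbolic hone h₁
  obtain ⟨s₂, t₂, hs₂, ht₂, hst₂, hsq₂⟩ := exists_skew_anticommute_of_involutionHyperbolic hone h₂
  obtain ⟨n₁, hn₁⟩ := exists_isSimilitude_of_skew_anticommute hchar hmul hone hs₁ ht₁ hst₁ hsq₁
  obtain ⟨n₂, hn₂⟩ := exists_isSimilitude_of_skew_anticommute hchar hmul hone hs₂ ht₂ hst₂ hsq₂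
  refine matrixInvolutionHyperbolic_two_of_isSimilitude hchar hinvol hone
    (m := α⁻¹ • (σ n₁ * n₂)) ?_
  have h := (hn₁.apply_mul hmul hinvol hn₂).smul α⁻¹
  rwa [show α⁻¹ ^ 2 * (-α * -(-α)) = -1 by field_simp, map_neg, map_one] at h

/-- **Lemma.** If neither `α` nor `-α` is a square in `K` and the involutions
`σ ⊗ id` on `A ⊗ K(√α)` and on `A ⊗ K(√-α)` are both hyperbolic, then `2 × σ` is
hyperbolic. -/
theorem statement12 {K A : Type*} [Field K] (hchar : (2 : K) ≠ 0)
    [Ring A] [Algebra K A] [FiniteDimensional K A]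
    (σ : A →ₗ[K] A)
    (hmul : ∀ x y : A, σ (x * y) = σ y * σ x)
    (hinvol : ∀ x : A, σ (σ x) = x)
    (α : K) (hα : ¬ IsSquare α) (hα' : ¬ IsSquare (-α))
    (h₁ : InvolutionHyperbolic
      (LinearMap.rTensor (AdjoinRoot (X ^ 2 - C α)) σ :
        A ⊗[K] AdjoinRoot (X ^ 2 - C α) → A ⊗[K] AdjoinRoot (X ^ 2 - C α)))
    (h₂ : InvolutionHyperbolic
      (LinearMap.rTensor (AdjoinRoot (X ^ 2 - C (-α))) σ :
        A ⊗[K] AdjoinRoot (X ^ 2 - C (-α)) → A ⊗[K] AdjoinRoot (X ^ 2 - C (-α)))) :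
    MatrixInvolutionHyperbolic (fun x => σ x) 2 :=
  statement12_general hchar σ hmul hinvol α hα h₁ h₂
end

section
/- Let (V, q) be a finite-dimensional quadratic space over a field K of characteristic ≠ 2 (q possibly degenerate). Then the closure of the single-form system {q} equals its K-span: Cl{q} = K·q; that is, a quadratic form w on V satisfies w(ψx, y) = w(x, φy) for all x, y ∈ V and all (φ, ψ^op) in the algebra of adjoints of {q} if and only if w = α·q for some α ∈ K. -/
/-!
For symmetric `B`, the rank-one maps `ψ = B(a, ·) • b` and `φ = B(b, ·) • a` form an adjoint
pair. Feeding them to the hypothesis on `W` gives `W(x, a) B(b, y) = B(x, a) W(b, y)` for all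
`x, a, b, y`, which makes `W` proportional to `B` as soon as `B ≠ 0`. If `B = 0`, every pair is
adjoint, and the pair `(0, id)` forces `W = 0`.
-/

open LinearMap (BilinForm)

namespace LinearMap

theorem exists_eq_smul_of_mul_eq_mul {K M N : Type*} [Field K] [AddCommMonoid M] [Module K M]
    [AddCommMonoid N] [Module K N] {B W : M →ₗ[K] N →ₗ[K] K} (hB : B ≠ 0)
    (h : ∀ x y x' y', W x y * B x' y' = B x y * W x' y') : ∃ α : K, W = α • B := by
  obtain ⟨x₀, y₀, hxy₀⟩ : ∃ x₀ y₀, B x₀ y₀ ≠ 0 := by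
    by_contra! h0
    exact hB (ext₂ h0)
  refine ⟨W x₀ y₀ / B x₀ y₀, ext₂ fun x y => ?_⟩
  rw [smul_apply, smul_apply, smul_eq_mul, div_mul_eq_mul_div, eq_div_iff hxy₀, h, mul_comm]

namespace BilinForm

variable {R M : Type*} [CommSemiring R] [AddCommMonoid M] [Module R M] {B W : BilinForm R M}

theorem IsSymm.isAdjointPair_smulRight (hB : B.IsSymm) (a b : M) :
    IsAdjointPair B B ((B a).smulRight b) ((B b).smulRight a) := fun x y => by
  simp only [smulRight_apply, map_smul, smul_apply, smul_eq_mul, hB.eq a x]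
  ring

theorem mul_eq_mul_of_forall_isAdjointPair (hB : B.IsSymm)
    (hW : ∀ φ ψ : Module.End R M, IsAdjointPair B B ψ φ → IsAdjointPair W W ψ φ)
    (x a b y : M) : W x a * B b y = B x a * W b y := by
  have h := hW _ _ (hB.isAdjointPair_smulRight a b) x y
  simp only [smulRight_apply, map_smul, smul_apply, smul_eq_mul, hB.eq a x] at h
  rw [mul_comm, ← h, mul_comm]

end BilinForm

end LinearMap

theorem statement15_general {K V : Type*} [Field K]
    [AddCommGroup V] [Module K V]
    (B : LinearMap.BilinForm K V) (hB : B.IsSymm)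
    (W : LinearMap.BilinForm K V) :
    ((∀ φ ψ : Module.End K V,
        (∀ x y : V, B (ψ x) y = B x (φ y)) →
        ∀ x y : V, W (ψ x) y = W x (φ y)) ↔
      ∃ α : K, W = α • B) := by
  constructor
  · intro hW
    by_cases hB0 : B = 0
    · refine ⟨0, LinearMap.ext₂ fun x y => ?_⟩
      simpa [hB0] using hW 0 1 (by simp [hB0]) x y
    · exact LinearMap.exists_eq_smul_of_mul_eq_mul hB0
        (LinearMap.BilinForm.mul_eq_mul_of_forall_isAdjointPair hB hW)
  · rintro ⟨α, rfl⟩ φ ψ hadj x y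
    simp only [LinearMap.smul_apply, smul_eq_mul, hadj x y]

/-- **Proposition.** For a single (possibly degenerate) quadratic form `q`, the closure
`Cl{q}` equals the line `K·q`: a quadratic (symmetric bilinear) form `w` on `V` satisfies
`w(ψx, y) = w(x, φy)` for all `x, y` and all pairs `(φ, ψᵒᵖ)` in the algebra of adjoints
of `{q}` iff `w = α·q` for some `α ∈ K`. -/
theorem statement15 {K V : Type*} [Field K] (hchar : (2 : K) ≠ 0)
    [AddCommGroup V] [Module K V] [FiniteDimensional K V]
    (B : LinearMap.BilinForm K V) (hB : B.IsSymm)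
    (W : LinearMap.BilinForm K V) (hW : W.IsSymm) :
    ((∀ φ ψ : Module.End K V,
        (∀ x y : V, B (ψ x) y = B x (φ y)) →
        ∀ x y : V, W (ψ x) y = W x (φ y)) ↔
      ∃ α : K, W = α • B) :=
  statement15_general B hB W
end

section
/- Let K be a field of characteristic ≠ 2, let α ∈ K and n ∈ ℕ. Let T_n ∈ M_n(K) be the matrix with 1's on the anti-diagonal and 0 elsewhere, and let S_n(α) ∈ M_n(K) be the symmetric matrix with α on the anti-diagonal, 1's on the sub-anti-diagonal (positions (i, j) with i + j = n + 2), and 0 elsewhere. If φ ∈ GL_n(K) satisfies φᵗ T_n = T_n φ and φᵗ S_n(α) = S_n(α) φ, then φ commutes with the Jordan block J_n(α) = T_n⁻¹ S_n(α), and consequently there exist β_1 ∈ K^× and β_2, …, β_n ∈ K such that φ is the upper-triangular Toeplitz matrix with β_1 on the main diagonal, β_2 on the first superdiagonal, …, β_n in the top-right corner. -/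
/-!
As `Tₙ² = 1` and `Sₙ(α) = Tₙ Jₙ(α)`, the two relations give
`Tₙ φ Jₙ(α) = φᵀ Sₙ(α) = Sₙ(α) φ = Tₙ Jₙ(α) φ`, so `φ` commutes with `Jₙ(α)` and hence with the
shift `Jₙ(0)`. Entrywise this says `φ (i+1) (j+1) = φ i j` and `φ (i+1) 0 = 0`, which forces the
upper-triangular Toeplitz shape; the diagonal entry is nonzero since `det φ = φ₀₀ⁿ`.
-/

open Matrix

/-- The reversal (anti-diagonal) matrix `Tₙ` (`1` at positions `i + j = n - 1`,
zero-indexed). -/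
def revMatrix (K : Type*) [Field K] (n : ℕ) : Matrix (Fin n) (Fin n) K :=
  Matrix.of fun i j => if (i : ℕ) + (j : ℕ) = n - 1 then 1 else 0

/-- The symmetric matrix `Sₙ(α)`: `α` on the anti-diagonal (`i + j = n - 1`,
zero-indexed), `1` on the sub-anti-diagonal (`i + j = n`), and `0` elsewhere. -/
def antiJordan {K : Type*} [Field K] (n : ℕ) (α : K) : Matrix (Fin n) (Fin n) K :=
  Matrix.of fun i j =>
    if (i : ℕ) + (j : ℕ) = n - 1 then α else if (i : ℕ) + (j : ℕ) = n then 1 else 0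

/-- The upper-triangular Jordan block `Jₙ(α)`. -/
def jordanBlock {K : Type*} [Field K] (n : ℕ) (α : K) : Matrix (Fin n) (Fin n) K :=
  Matrix.of fun i j => if i = j then α else if (j : ℕ) = (i : ℕ) + 1 then 1 else 0

section JordanBlock

variable {K : Type*} [Field K] {n : ℕ}

lemma revMatrix_mul_apply (A : Matrix (Fin n) (Fin n) K) (i j : Fin n) :
    (revMatrix K n * A) i j = A i.rev j := by
  have hrev : ∀ k : Fin n, (i : ℕ) + k = n - 1 ↔ i.rev = k := fun k => by
    rw [Fin.ext_iff, Fin.val_rev]; omega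
  simp only [revMatrix, mul_apply, of_apply, hrev, ite_mul, one_mul, zero_mul,
    Finset.sum_ite_eq, Finset.mem_univ, if_true]

lemma revMatrix_mul_self : revMatrix K n * revMatrix K n = 1 := by
  ext i j
  rw [revMatrix_mul_apply]
  simp only [revMatrix, of_apply, one_apply, Fin.ext_iff, Fin.val_rev]
  split_ifs <;> first | rfl | omega

lemma antiJordan_eq_revMatrix_mul (α : K) :
    antiJordan n α = revMatrix K n * jordanBlock n α := by
  ext i j
  simp only [revMatrix_mul_apply, antiJordan, jordanBlock, of_apply, Fin.ext_iff, Fin.val_rev]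
  split_ifs <;> first | rfl | omega

lemma jordanBlock_eq_smul_one_add (α : K) :
    jordanBlock n α = α • 1 + jordanBlock n 0 := by
  ext i j
  simp only [jordanBlock, of_apply, Matrix.add_apply, Matrix.smul_apply, one_apply, smul_eq_mul]
  split_ifs <;> simp

lemma jordanBlock_zero_apply (i j : Fin n) :
    jordanBlock n (0 : K) i j = if (j : ℕ) = i + 1 then 1 else 0 := by
  simp only [jordanBlock, of_apply]
  split_ifs <;> first | rfl | omega

lemma mul_jordanBlock_zero_apply_succ (A : Matrix (Fin n) (Fin n) K) (i : Fin n) (j : ℕ)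
    (hj : j + 1 < n) : (A * jordanBlock n (0 : K)) i ⟨j + 1, hj⟩ = A i ⟨j, by omega⟩ := by
  have hsucc : ∀ k : Fin n, j + 1 = (k : ℕ) + 1 ↔ k = ⟨j, by omega⟩ := fun k => by
    simp only [Fin.ext_iff]; omega
  simp only [mul_apply, jordanBlock_zero_apply, hsucc, mul_ite, mul_one, mul_zero,
    Finset.sum_ite_eq', Finset.mem_univ, if_true]

lemma mul_jordanBlock_zero_apply_zero (A : Matrix (Fin n) (Fin n) K) (i : Fin n)
    (hn : 0 < n) : (A * jordanBlock n (0 : K)) i ⟨0, hn⟩ = 0 := by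
  simp [mul_apply, jordanBlock_zero_apply]

lemma jordanBlock_zero_mul_apply (A : Matrix (Fin n) (Fin n) K) (i : ℕ) (hi : i + 1 < n)
    (j : Fin n) : (jordanBlock n (0 : K) * A) ⟨i, by omega⟩ j = A ⟨i + 1, hi⟩ j := by
  have hsucc : ∀ k : Fin n, (k : ℕ) = i + 1 ↔ ⟨i + 1, hi⟩ = k := fun k => by
    simp only [Fin.ext_iff]; omega
  simp only [mul_apply, jordanBlock_zero_apply, hsucc, ite_mul, one_mul, zero_mul,
    Finset.sum_ite_eq, Finset.mem_univ, if_true]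

lemma commute_jordanBlock_of_transpose_mul_eq {φ : Matrix (Fin n) (Fin n) K} {α : K}
    (hT : φᵀ * revMatrix K n = revMatrix K n * φ)
    (hS : φᵀ * antiJordan n α = antiJordan n α * φ) : Commute φ (jordanBlock n α) := by
  have h : revMatrix K n * (φ * jordanBlock n α) = revMatrix K n * (jordanBlock n α * φ) := by
    rw [← mul_assoc, ← hT, mul_assoc, ← antiJordan_eq_revMatrix_mul, hS,
      antiJordan_eq_revMatrix_mul, mul_assoc]
  show φ * jordanBlock n α = jordanBlock n α * φ
  simpa only [← mul_assoc, revMatrix_mul_self, one_mul] using congrArg (revMatrix K n * ·) h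

lemma Commute.jordanBlock_zero {A : Matrix (Fin n) (Fin n) K} {α : K}
    (h : Commute A (jordanBlock n α)) : Commute A (jordanBlock n 0) := by
  have h0 := h.sub_right ((Commute.one_right A).smul_right α)
  rwa [jordanBlock_eq_smul_one_add α, add_sub_cancel_left] at h0

/-- The value `1` beyond the last column only matters for `n = 0`, where it keeps
`toeplitzCoeff A 0 ≠ 0` true. -/
def toeplitzCoeff (A : Matrix (Fin n) (Fin n) K) (d : ℕ) : K :=
  if h : d < n then A ⟨0, by omega⟩ ⟨d, h⟩ else 1

lemma apply_eq_toeplitzCoeff_of_commute {A : Matrix (Fin n) (Fin n) K}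
    (h : Commute A (jordanBlock n 0)) (i j : Fin n) :
    A i j = if (i : ℕ) ≤ j then toeplitzCoeff A (j - i) else 0 := by
  have hcol : ∀ i (hi : i + 1 < n), A ⟨i + 1, hi⟩ ⟨0, by omega⟩ = 0 := fun i hi => by
    rw [← jordanBlock_zero_mul_apply A i hi, ← h.eq, mul_jordanBlock_zero_apply_zero]
  have hdiag : ∀ i j (hi : i + 1 < n) (hj : j + 1 < n),
      A ⟨i + 1, hi⟩ ⟨j + 1, hj⟩ = A ⟨i, by omega⟩ ⟨j, by omega⟩ := fun i j hi hj => by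
    rw [← jordanBlock_zero_mul_apply A i hi, ← h.eq, mul_jordanBlock_zero_apply_succ]
  suffices ∀ i j (hi : i < n) (hj : j < n),
      A ⟨i, hi⟩ ⟨j, hj⟩ = if i ≤ j then toeplitzCoeff A (j - i) else 0 from
    this i j i.isLt j.isLt
  intro i
  induction i with
  | zero => intro j hi hj; simp [toeplitzCoeff, hj]
  | succ i ih =>
    rintro (_ | j) hi hj
    · simp [hcol i hi]
    · rw [hdiag i j hi hj, ih j (by omega) (by omega)]
      simp

lemma toeplitzCoeff_zero_ne_zero {A : Matrix (Fin n) (Fin n) K} (hA : IsUnit A)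
    (htoep : ∀ i j : Fin n, A i j = if (i : ℕ) ≤ j then toeplitzCoeff A (j - i) else 0) :
    toeplitzCoeff A 0 ≠ 0 := by
  rcases Nat.eq_zero_or_pos n with rfl | hn
  · simp [toeplitzCoeff]
  have hupper : A.IsUpperTriangular := fun i j hji => by
    rw [htoep, if_neg (by simpa using hji)]
  have hdet : A.det = toeplitzCoeff A 0 ^ n := by
    simp [det_of_isUpperTriangular hupper, htoep]
  intro h0
  exact ((isUnit_iff_isUnit_det A).mp hA).ne_zero (by rw [hdet, h0, zero_pow hn.ne'])

end JordanBlock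

theorem statement17_general {K : Type*} [Field K] (n : ℕ) (α : K)
    (φ : Matrix (Fin n) (Fin n) K) (hφ : IsUnit φ)
    (hT : φᵀ * revMatrix K n = revMatrix K n * φ)
    (hS : φᵀ * antiJordan n α = antiJordan n α * φ) :
    φ * jordanBlock n α = jordanBlock n α * φ ∧
    ∃ c : ℕ → K, c 0 ≠ 0 ∧
      ∀ i j : Fin n, φ i j = if (i : ℕ) ≤ (j : ℕ) then c ((j : ℕ) - (i : ℕ)) else 0 := by
  have hcomm := commute_jordanBlock_of_transpose_mul_eq hT hS
  have htoep := apply_eq_toeplitzCoeff_of_commute hcomm.jordanBlock_zero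
  exact ⟨hcomm.eq, toeplitzCoeff φ, toeplitzCoeff_zero_ne_zero hφ htoep, htoep⟩

/-- **Lemma.** If `φ ∈ GLₙ(K)` satisfies `φᵀ Tₙ = Tₙ φ` and `φᵀ Sₙ(α) = Sₙ(α) φ`, then
`φ` commutes with the Jordan block `Jₙ(α) = Tₙ⁻¹ Sₙ(α)`, and consequently `φ` is an
upper-triangular Toeplitz matrix with invertible constant diagonal. -/
theorem statement17 {K : Type*} [Field K] (hchar : (2 : K) ≠ 0) (n : ℕ) (α : K)
    (φ : Matrix (Fin n) (Fin n) K) (hφ : IsUnit φ)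
    (hT : φᵀ * revMatrix K n = revMatrix K n * φ)
    (hS : φᵀ * antiJordan n α = antiJordan n α * φ) :
    φ * jordanBlock n α = jordanBlock n α * φ ∧
    ∃ c : ℕ → K, c 0 ≠ 0 ∧
      ∀ i j : Fin n, φ i j = if (i : ℕ) ≤ (j : ℕ) then c ((j : ℕ) - (i : ℕ)) else 0 :=
  statement17_general n α φ hφ hT hS
end

section
/- Let K be a field of characteristic ≠ 2, let q_1, q_2 ∈ M_n(K) be symmetric matrices regarded as quadratic forms on K^n, with q_1 invertible, and set J = q_1⁻¹ q_2. Then: (i) for every pair (φ, ψ^op) in the algebra of adjoints of {q_1, q_2} (i.e., ψᵗ q_i = q_i φ for i = 1, 2), both φ and ψ commute with J; (ii) for every polynomial f ∈ K[X], the matrix q_1 · f(J) is symmetric and the corresponding quadratic form lies in Cl{q_1, q_2}; and (iii) if the pair {q_1, q_2} is hyperbolic, then the quadratic form q_1 · f(J) is hyperbolic for every f ∈ K[X]. -/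
/-!
Write `J = q₁⁻¹ q₂`, so that `q₁ J = q₂` and `J` is self-adjoint for `q₁`. If `ψᵀ qᵢ = qᵢ φ`
for `i = 1, 2`, then `q₁ φ J = ψᵀ q₂ = q₁ J φ`, so `φ` commutes with `J`; for symmetric `qᵢ` the
roles of `φ` and `ψ` can be swapped by transposing. Polynomials in `J` are then again
`q₁`-self-adjoint and commute with `φ`, which gives (ii).

For (iii), let `Kⁿ = U ⊕ W` with `U, W` isotropic for `q₁, q₂`. In characteristic `≠ 2`
polarization makes `U` and `W` totally isotropic, and as `q₁` is nondegenerate both have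
dimension `n / 2`, so `U` is its own `q₁`-orthogonal. Since `q₁(u, J v) = q₂(u, v) = 0` for
`u, v ∈ U`, the space `U` is `J`-stable, hence `f(J)`-stable, and `q₁ f(J)` vanishes on it;
likewise on `W`.
-/

open Matrix Polynomial

/-- A family of symmetric matrices, regarded as quadratic forms on `Kⁿ`, is hyperbolic if
`Kⁿ` is the direct sum of two subspaces on which all the forms vanish. -/
def IsHyperbolicMatSystem {K : Type*} [Field K] {n : ℕ} {ι : Sort*}
    (q : ι → Matrix (Fin n) (Fin n) K) : Prop :=
  ∃ U W : Submodule K (Fin n → K), IsCompl U W ∧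
    (∀ i, ∀ v ∈ U, v ⬝ᵥ (q i).mulVec v = 0) ∧
    (∀ i, ∀ v ∈ W, v ⬝ᵥ (q i).mulVec v = 0)

namespace Polynomial

theorem semiconjBy_aeval {R A : Type*} [CommSemiring R] [Semiring A] [Algebra R A]
    {a b c : A} (h : SemiconjBy c a b) (f : R[X]) : SemiconjBy c (aeval a f) (aeval b f) := by
  induction f using Polynomial.induction_on' with
  | add p q hp hq => simpa only [map_add] using hp.add_right hq
  | monomial k r =>
    simpa only [aeval_monomial] using
      SemiconjBy.mul_right (Algebra.commute_algebraMap_right r c) (h.pow_right k)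

end Polynomial

namespace Matrix

variable {R ι : Type*} [CommRing R] [Fintype ι]

theorem IsAdjointPair.symm_of_isSymm {q φ ψ : Matrix ι ι R} (hq : q.IsSymm)
    (h : q.IsAdjointPair q ψ φ) : q.IsAdjointPair q φ ψ := by
  have := congrArg transpose h
  rwa [transpose_mul, transpose_mul, transpose_transpose, hq.eq, eq_comm] at this

theorem IsAdjointPair.mul_of_commute {q φ ψ P : Matrix ι ι R} (h : q.IsAdjointPair q ψ φ)
    (hP : Commute φ P) : (q * P).IsAdjointPair (q * P) ψ φ := by
  rw [IsAdjointPair, ← Matrix.mul_assoc, h, Matrix.mul_assoc, hP.eq, Matrix.mul_assoc]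

theorem IsSymm.mul_of_isSelfAdjoint {q P : Matrix ι ι R} (hq : q.IsSymm)
    (hP : q.IsSelfAdjoint P) : (q * P).IsSymm := by
  rw [IsSymm, transpose_mul, hq.eq]
  exact hP

variable [DecidableEq ι]

theorem transpose_aeval (M : Matrix ι ι R) (f : R[X]) : (aeval M f)ᵀ = aeval Mᵀ f := by
  apply MulOpposite.op_injective
  rw [← aeval_op_apply]
  exact (aeval_algHom_apply (transposeAlgEquiv ι R R) M f).symm

theorem IsSelfAdjoint.aeval {q M : Matrix ι ι R} (hM : q.IsSelfAdjoint M) (f : R[X]) :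
    q.IsSelfAdjoint (aeval M f) := by
  rw [Matrix.IsSelfAdjoint, IsAdjointPair, transpose_aeval]
  exact (semiconjBy_aeval hM.symm f).symm

section Pencil

variable {q₁ q₂ : Matrix ι ι R}

theorem isSelfAdjoint_inv_mul (h₁ : q₁.IsSymm) (h₂ : q₂.IsSymm) (hunit : IsUnit q₁.det) :
    q₁.IsSelfAdjoint (q₁⁻¹ * q₂) := by
  rw [Matrix.IsSelfAdjoint, IsAdjointPair, transpose_mul, transpose_nonsing_inv, h₁.eq, h₂.eq,
    Matrix.mul_assoc, nonsing_inv_mul _ hunit, Matrix.mul_one,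
    mul_nonsing_inv_cancel_left _ _ hunit]

theorem commute_inv_mul_of_isAdjointPair (hunit : IsUnit q₁.det) {φ ψ : Matrix ι ι R}
    (h₁ : q₁.IsAdjointPair q₁ ψ φ) (h₂ : q₂.IsAdjointPair q₂ ψ φ) :
    Commute φ (q₁⁻¹ * q₂) := by
  have hq₁J : q₁ * (q₁⁻¹ * q₂) = q₂ := mul_nonsing_inv_cancel_left _ _ hunit
  apply ((isUnit_iff_isUnit_det q₁).2 hunit).mul_left_cancel
  calc q₁ * (φ * (q₁⁻¹ * q₂)) = ψᵀ * (q₁ * (q₁⁻¹ * q₂)) := by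
        rw [← Matrix.mul_assoc, ← h₁, Matrix.mul_assoc]
    _ = q₂ * φ := by rw [hq₁J]; exact h₂
    _ = q₁ * ((q₁⁻¹ * q₂) * φ) := by rw [← Matrix.mul_assoc, hq₁J]

end Pencil

end Matrix

theorem LinearMap.BilinForm.orthogonal_eq_self_of_isCompl {K V : Type*} [Field K]
    [AddCommGroup V] [Module K V] [FiniteDimensional K V] {B : LinearMap.BilinForm K V}
    (hB : B.Nondegenerate) {U W : Submodule K V} (hUW : IsCompl U W)
    (hU : U ≤ B.orthogonal U) (hW : W ≤ B.orthogonal W) : B.orthogonal U = U := by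
  have hsum := Submodule.finrank_add_eq_of_isCompl hUW
  have hU' := Submodule.finrank_mono hU
  have hW' := Submodule.finrank_mono hW
  rw [finrank_orthogonal hB] at hU' hW'
  refine (Submodule.eq_of_le_of_finrank_le hU ?_).symm
  rw [finrank_orthogonal hB]
  omega

namespace Submodule

variable {R ι : Type*} [CommSemiring R] [Fintype ι] [DecidableEq ι]

def mulVecStabilizer (S : Submodule R (ι → R)) : Subalgebra R (Matrix ι ι R) where
  carrier := {M | ∀ v ∈ S, M *ᵥ v ∈ S}
  mul_mem' {M N} hM hN v hv := by
    rw [← mulVec_mulVec]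
    exact hM _ (hN v hv)
  add_mem' {M N} hM hN v hv := by
    rw [add_mulVec]
    exact S.add_mem (hM v hv) (hN v hv)
  algebraMap_mem' a v hv := by
    rw [Algebra.algebraMap_eq_smul_one, smul_mulVec, one_mulVec]
    exact S.smul_mem a hv

theorem aeval_mem_mulVecStabilizer {S : Submodule R (ι → R)} {M : Matrix ι ι R}
    (hM : M ∈ S.mulVecStabilizer) (f : R[X]) : aeval M f ∈ S.mulVecStabilizer :=
  Algebra.adjoin_le (Set.singleton_subset_iff.2 hM) (aeval_mem_adjoin_singleton R M)

end Submodule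

namespace Matrix

variable {R ι : Type*} [CommRing R] [Fintype ι] [DecidableEq ι]

theorem isotropic_mul_of_mem_mulVecStabilizer {q P : Matrix ι ι R} {S : Submodule R (ι → R)}
    (hS : S ≤ (toBilin' q).orthogonal S) (hP : P ∈ S.mulVecStabilizer) :
    ∀ v ∈ S, v ⬝ᵥ (q * P) *ᵥ v = 0 := by
  intro v hv
  rw [← mulVec_mulVec, ← toBilin'_apply']
  exact hS (hP v hv) v hv

theorem inv_mul_mem_mulVecStabilizer {q₁ q₂ : Matrix ι ι R} (hunit : IsUnit q₁.det)
    {S : Submodule R (ι → R)} (hS₁ : (toBilin' q₁).orthogonal S = S)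
    (hS₂ : S ≤ (toBilin' q₂).orthogonal S) : q₁⁻¹ * q₂ ∈ S.mulVecStabilizer := by
  intro v hv
  rw [← hS₁, LinearMap.BilinForm.mem_orthogonal_iff]
  intro u hu
  rw [toBilin'_apply', mulVec_mulVec, mul_nonsing_inv_cancel_left _ _ hunit, ← toBilin'_apply']
  exact hS₂ hv u hu

variable {K : Type*} [Field K]

theorem le_orthogonal_toBilin'_of_isotropic (h2 : (2 : K) ≠ 0) {q : Matrix ι ι K}
    (hq : q.IsSymm) {S : Submodule K (ι → K)} (hS : ∀ v ∈ S, v ⬝ᵥ q *ᵥ v = 0) :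
    S ≤ (toBilin' q).orthogonal S := by
  intro v hv
  rw [LinearMap.BilinForm.mem_orthogonal_iff]
  intro u hu
  have hsymm : v ⬝ᵥ q *ᵥ u = u ⬝ᵥ q *ᵥ v := by
    rw [dotProduct_mulVec, ← mulVec_transpose, hq.eq, dotProduct_comm]
  have hsum := hS (u + v) (S.add_mem hu hv)
  rw [mulVec_add, dotProduct_add, add_dotProduct, add_dotProduct, hS u hu, hS v hv,
    hsymm] at hsum
  have htwice : (2 : K) * (u ⬝ᵥ q *ᵥ v) = 0 := by linear_combination hsum
  rw [toBilin'_apply']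
  exact (mul_eq_zero.mp htwice).resolve_left h2

theorem isotropic_mul_aeval_of_isCompl {q₁ q₂ : Matrix ι ι K} (hunit : IsUnit q₁.det)
    {S T : Submodule K (ι → K)} (hST : IsCompl S T) (hS₁ : S ≤ (toBilin' q₁).orthogonal S)
    (hS₂ : S ≤ (toBilin' q₂).orthogonal S) (hT₁ : T ≤ (toBilin' q₁).orthogonal T) (f : K[X]) :
    ∀ v ∈ S, v ⬝ᵥ (q₁ * aeval (q₁⁻¹ * q₂) f) *ᵥ v = 0 := by
  have hB : (toBilin' q₁).Nondegenerate :=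
    nondegenerate_toBilin'_iff.2 (nondegenerate_of_det_ne_zero hunit.ne_zero)
  have hJ := inv_mul_mem_mulVecStabilizer hunit
    (LinearMap.BilinForm.orthogonal_eq_self_of_isCompl hB hST hS₁ hT₁) hS₂
  exact isotropic_mul_of_mem_mulVecStabilizer hS₁ (Submodule.aeval_mem_mulVecStabilizer hJ f)

end Matrix

theorem IsHyperbolicMatSystem.mul_aeval {K : Type*} [Field K] (h2 : (2 : K) ≠ 0) {n : ℕ}
    {q₁ q₂ : Matrix (Fin n) (Fin n) K} (h₁ : q₁.IsSymm) (h₂ : q₂.IsSymm) (hunit : IsUnit q₁.det)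
    (h : IsHyperbolicMatSystem ![q₁, q₂]) (f : K[X]) :
    IsHyperbolicMatSystem fun _ : Unit => q₁ * aeval (q₁⁻¹ * q₂) f := by
  obtain ⟨U, W, hUW, hU, hW⟩ := h
  have hU₁ := le_orthogonal_toBilin'_of_isotropic h2 h₁ (hU 0)
  have hU₂ := le_orthogonal_toBilin'_of_isotropic h2 h₂ (hU 1)
  have hW₁ := le_orthogonal_toBilin'_of_isotropic h2 h₁ (hW 0)
  have hW₂ := le_orthogonal_toBilin'_of_isotropic h2 h₂ (hW 1)
  exact ⟨U, W, hUW, fun _ => isotropic_mul_aeval_of_isCompl hunit hUW hU₁ hU₂ hW₁ f,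
    fun _ => isotropic_mul_aeval_of_isCompl hunit hUW.symm hW₁ hW₂ hU₁ f⟩

/-- **Lemma.** Let `q₁, q₂` be symmetric matrices with `q₁` invertible and
`J = q₁⁻¹ q₂`. Then (i) every pair `(φ, ψᵒᵖ)` in the algebra of adjoints of `{q₁, q₂}`
commutes with `J`; (ii) for every `f ∈ K[X]`, the matrix `q₁ f(J)` is symmetric and lies
in `Cl{q₁, q₂}`; (iii) if `{q₁, q₂}` is hyperbolic then so is `q₁ f(J)`. -/
theorem statement18 {K : Type*} [Field K] (hchar : (2 : K) ≠ 0) {n : ℕ}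
    (q₁ q₂ : Matrix (Fin n) (Fin n) K)
    (h₁ : q₁ᵀ = q₁) (h₂ : q₂ᵀ = q₂) (hunit : IsUnit q₁.det) :
    -- (i)
    (∀ φ ψ : Matrix (Fin n) (Fin n) K,
      ψᵀ * q₁ = q₁ * φ → ψᵀ * q₂ = q₂ * φ →
      φ * (q₁⁻¹ * q₂) = (q₁⁻¹ * q₂) * φ ∧ ψ * (q₁⁻¹ * q₂) = (q₁⁻¹ * q₂) * ψ) ∧
    -- (ii)
    (∀ f : K[X],
      (q₁ * aeval (q₁⁻¹ * q₂) f)ᵀ = q₁ * aeval (q₁⁻¹ * q₂) f ∧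
      ∀ φ ψ : Matrix (Fin n) (Fin n) K,
        ψᵀ * q₁ = q₁ * φ → ψᵀ * q₂ = q₂ * φ →
        ψᵀ * (q₁ * aeval (q₁⁻¹ * q₂) f) = (q₁ * aeval (q₁⁻¹ * q₂) f) * φ) ∧
    -- (iii)
    (IsHyperbolicMatSystem ![q₁, q₂] →
      ∀ f : K[X],
        IsHyperbolicMatSystem fun _ : Unit => q₁ * aeval (q₁⁻¹ * q₂) f) := by
  have hcomm {φ ψ : Matrix (Fin n) (Fin n) K} (hφ₁ : q₁.IsAdjointPair q₁ ψ φ)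
      (hφ₂ : q₂.IsAdjointPair q₂ ψ φ) : Commute φ (q₁⁻¹ * q₂) :=
    commute_inv_mul_of_isAdjointPair hunit hφ₁ hφ₂
  refine ⟨fun φ ψ hφ₁ hφ₂ => ⟨hcomm hφ₁ hφ₂, ?_⟩, fun f => ⟨?_, fun φ ψ hφ₁ hφ₂ => ?_⟩,
    fun h f => h.mul_aeval hchar h₁ h₂ hunit f⟩
  · exact hcomm (IsAdjointPair.symm_of_isSymm h₁ hφ₁) (IsAdjointPair.symm_of_isSymm h₂ hφ₂)
  · exact IsSymm.mul_of_isSelfAdjoint h₁ ((isSelfAdjoint_inv_mul h₁ h₂ hunit).aeval f)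
  · exact IsAdjointPair.mul_of_commute hφ₁ (semiconjBy_aeval (hcomm hφ₁ hφ₂) f)
end
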